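/- arXiv:1908.04184 — 11 statements merged into one kernel-verified Lean document; each statement's English description precedes it below -/
import Mathlib

section
/- Let A and B be groups. The kernel of the canonical homomorphism (1_A, 0) : A * B → A from the free product to A (which is the identity on A and trivial on B) is generated as a subgroup by the set of elements of the form a·b·a⁻¹ with a ∈ A and b ∈ B (viewing A and B inside the free product). -/
open Monoid

lemma conj_mem_closure (A B : Type) [Group A] [Group B] (c : A)
    {n : Coprod A B} (hn : n ∈ Subgroup.closure {x : Coprod A B | ∃ (a : A) (b : B),
        x = Coprod.inl a * Coprod.inr b * (Coprod.inl a)⁻¹}) :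
    (Coprod.inl c)⁻¹ * n * Coprod.inl c ∈ Subgroup.closure {x : Coprod A B | ∃ (a : A) (b : B),
        x = Coprod.inl a * Coprod.inr b * (Coprod.inl a)⁻¹} := by
  induction hn using Subgroup.closure_induction with
  | mem x hx =>
    obtain ⟨a, b, rfl⟩ := hx
    apply Subgroup.subset_closure
    exact ⟨c⁻¹ * a, b, by simp [mul_assoc]⟩
  | one => simpa using Subgroup.one_mem _
  | mul x y hx hy ihx ihy =>
    have := Subgroup.mul_mem _ ihx ihy
    simpa [mul_assoc] using this
  | inv x hx ihx =>
    have := Subgroup.inv_mem _ ihx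
    simpa [mul_assoc] using this

/-- For groups `A` and `B`, the kernel of the canonical map `A ∗ B →* A`
(identity on `A`, trivial on `B`) is generated by the elements `a b a⁻¹`. -/
theorem stmt0 (A B : Type) [Group A] [Group B] :
    (Coprod.fst : Coprod A B →* A).ker =
      Subgroup.closure {x : Coprod A B | ∃ (a : A) (b : B),
        x = Coprod.inl a * Coprod.inr b * (Coprod.inl a)⁻¹} := by
  set N := Subgroup.closure {x : Coprod A B | ∃ (a : A) (b : B),
        x = Coprod.inl a * Coprod.inr b * (Coprod.inl a)⁻¹} with hN
  apply le_antisymm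
  · intro x hx
    have key : ∀ y : Coprod A B, (Coprod.inl (Coprod.fst y))⁻¹ * y ∈ N := by
      intro y
      induction y using Coprod.induction_on with
      | inl a => simp [Subgroup.one_mem]
      | inr b =>
        have : Coprod.inr b ∈ N := Subgroup.subset_closure ⟨1, b, by simp⟩
        simpa using this
      | mul x y ihx ihy =>
        have h1 : (Coprod.inl (Coprod.fst (x * y)))⁻¹ * (x * y) =
            ((Coprod.inl (Coprod.fst y))⁻¹ * ((Coprod.inl (Coprod.fst x))⁻¹ * x)
              * Coprod.inl (Coprod.fst y)) * ((Coprod.inl (Coprod.fst y))⁻¹ * y) := by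
          simp [mul_assoc, mul_inv_rev]
        rw [h1]
        exact Subgroup.mul_mem _ (conj_mem_closure A B _ ihx) ihy
    have := key x
    rw [MonoidHom.mem_ker.mp hx] at this
    simpa using this
  · rw [Subgroup.closure_le]
    rintro x ⟨a, b, rfl⟩
    simp [MonoidHom.mem_ker]
end

section
/- Let M and N be groups acting on each other (with N acting on M written ⁿm and M acting on N written ᵐn), and acting on themselves by conjugation. If the actions are compatible, i.e. for all m, m' ∈ M and n, n' ∈ N one has ⁽ᵐn⁾m' = combined action of the word m·n·m⁻¹ on m' and ⁽ⁿm⁾n' = combined action of n·m·n⁻¹ on n', then there is a well-defined action of the free product M * N on M extending the conjugation action of M and the given action of N, determined inductively on word length. -/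
open Monoid

/-- If groups `M` and `N` act compatibly on each other (`ξ : N → Aut M`,
`ξ' : M → Aut N`), then there is a well-defined action of the free product
`M ∗ N` on `M` extending the conjugation action of `M` and the action `ξ` of `N`. -/
theorem stmt5 (M N : Type) [Group M] [Group N]
    (ξ : N →* MulAut M) (ξ' : M →* MulAut N)
    (hc1 : ∀ (m m' : M) (n : N), ξ (ξ' m n) m' = m * ξ n (m⁻¹ * m' * m) * m⁻¹)
    (hc2 : ∀ (m : M) (n n' : N), ξ' (ξ n m) n' = n * ξ' m (n⁻¹ * n' * n) * n⁻¹) :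
    ∃! φ : Coprod M N →* MulAut M,
      (∀ m : M, φ (Coprod.inl m) = MulAut.conj m) ∧
      (∀ n : N, φ (Coprod.inr n) = ξ n) := by
  refine ⟨Coprod.lift (MulAut.conj : M →* MulAut M) ξ,
    ⟨fun m => by simp, fun n => by simp⟩, fun ψ ⟨h1, h2⟩ => ?_⟩
  apply Coprod.hom_ext <;> ext x <;> simp [h1, h2]
end

section
/- Let M and N be groups acting compatibly on each other. Let K be the normal closure in the free product M * N of the set of elements of the form (ⁿm)·n·m⁻¹·n⁻¹ and (ᵐn)·m·n⁻¹·m⁻¹ for m ∈ M, n ∈ N. Then K acts trivially on both M and N under the induced actions of M * N (the unique homomorphisms M * N → Aut(M) and M * N → Aut(N) extending conjugation and the given mutual actions). -/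
open Monoid

/-- Let `M`, `N` be groups acting compatibly on each other. Then the normal
closure `K` in `M ∗ N` of the elements `(ⁿm)·n·m⁻¹·n⁻¹` and `(ᵐn)·m·n⁻¹·m⁻¹`
acts trivially on both `M` and `N` under the induced actions of `M ∗ N`
(the homomorphisms to `Aut M`, `Aut N` extending conjugation and the given
mutual actions). -/
theorem stmt6 (M N : Type) [Group M] [Group N]
    (ξ : N →* MulAut M) (ξ' : M →* MulAut N)
    (hc1 : ∀ (m m' : M) (n : N), ξ (ξ' m n) m' = m * ξ n (m⁻¹ * m' * m) * m⁻¹)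
    (hc2 : ∀ (m : M) (n n' : N), ξ' (ξ n m) n' = n * ξ' m (n⁻¹ * n' * n) * n⁻¹) :
    ∀ k ∈ Subgroup.normalClosure
      ({x : Coprod M N | ∃ (m : M) (n : N),
          x = Coprod.inl (ξ n m) * Coprod.inr n * (Coprod.inl m)⁻¹ * (Coprod.inr n)⁻¹} ∪
       {x : Coprod M N | ∃ (m : M) (n : N),
          x = Coprod.inr (ξ' m n) * Coprod.inl m * (Coprod.inr n)⁻¹ * (Coprod.inl m)⁻¹}),
      Coprod.lift (MulAut.conj : M →* MulAut M) ξ k = 1 ∧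
      Coprod.lift ξ' (MulAut.conj : N →* MulAut N) k = 1 := by
  intro k hk
  constructor
  · suffices h : k ∈ (Coprod.lift (MulAut.conj : M →* MulAut M) ξ).ker from h
    refine Subgroup.normalClosure_le_normal ?_ hk
    rintro x (⟨m, n, rfl⟩ | ⟨m, n, rfl⟩) <;>
      simp only [SetLike.mem_coe, MonoidHom.mem_ker, map_mul, map_inv,
        Coprod.lift_apply_inl, Coprod.lift_apply_inr] <;>
      ext m' <;>
      simp only [MulAut.mul_apply, MulAut.one_apply, MulAut.conj_apply,
        MulAut.conj_inv_apply, MulAut.inv_def, MulAut.conj_symm_apply]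
    · rw [map_mul, map_mul, map_inv, MulEquiv.apply_symm_apply]
      group
    · rw [hc1]
      have h1 : m⁻¹ * (m * (ξ n).symm (m⁻¹ * m' * m) * m⁻¹) * m
          = (ξ n).symm (m⁻¹ * m' * m) := by group
      rw [h1, MulEquiv.apply_symm_apply]
      group
  · suffices h : k ∈ (Coprod.lift ξ' (MulAut.conj : N →* MulAut N)).ker from h
    refine Subgroup.normalClosure_le_normal ?_ hk
    rintro x (⟨m, n, rfl⟩ | ⟨m, n, rfl⟩) <;>
      simp only [SetLike.mem_coe, MonoidHom.mem_ker, map_mul, map_inv,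
        Coprod.lift_apply_inl, Coprod.lift_apply_inr] <;>
      ext n' <;>
      simp only [MulAut.mul_apply, MulAut.one_apply, MulAut.conj_apply,
        MulAut.conj_inv_apply, MulAut.inv_def, MulAut.conj_symm_apply]
    · rw [hc2]
      have h1 : n⁻¹ * (n * (ξ' m).symm (n⁻¹ * n' * n) * n⁻¹) * n
          = (ξ' m).symm (n⁻¹ * n' * n) := by group
      rw [h1, MulEquiv.apply_symm_apply]
      group
    · rw [map_mul, map_mul, map_inv, MulEquiv.apply_symm_apply]
      group
end

section
/- Let M and N be groups acting compatibly on each other, and let M ⋈ N = (M * N)/K be the Peiffer product, where K is the normal closure of the elements (ⁿm)·n·m⁻¹·n⁻¹ and (ᵐn)·m·n⁻¹·m⁻¹. Then the quotient map q : M * N → M ⋈ N is the coequalizer (in the category of groups) of the two homomorphisms from (N♭M) * (M♭N) to M * N given on the two free factors by: the subgroup inclusions k_{N,M} and k_{M,N} into M * N on one hand, and the action maps ξᴺ_M : N♭M → M ⊆ M * N and ξᴹ_N : M♭N → N ⊆ M * N on the other. -/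
open Monoid

/-- The subgroup `K` of `M ∗ N`: the normal closure of the elements
`(ⁿm)·n·m⁻¹·n⁻¹` and `(ᵐn)·m·n⁻¹·m⁻¹`. The Peiffer product is `(M ∗ N) ⧸ K`. -/
def peifferSub (M N : Type) [Group M] [Group N]
    (ξ : N →* MulAut M) (ξ' : M →* MulAut N) : Subgroup (Coprod M N) :=
  Subgroup.normalClosure
    ({x : Coprod M N | ∃ (m : M) (n : N),
        x = Coprod.inl (ξ n m) * Coprod.inr n * (Coprod.inl m)⁻¹ * (Coprod.inr n)⁻¹} ∪
     {x : Coprod M N | ∃ (m : M) (n : N),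
        x = Coprod.inr (ξ' m n) * Coprod.inl m * (Coprod.inr n)⁻¹ * (Coprod.inl m)⁻¹})

instance peifferSub_normal (M N : Type) [Group M] [Group N]
    (ξ : N →* MulAut M) (ξ' : M →* MulAut N) : (peifferSub M N ξ ξ').Normal :=
  Subgroup.normalClosure_normal

section Aux

variable {A B : Type} [Group A] [Group B]

/-- The set of conjugates `inl a * inr b * (inl a)⁻¹` in `A ∗ B`. -/
def genSet (A B : Type) [Group A] [Group B] : Set (Coprod A B) :=
  {x | ∃ (a : A) (b : B), x = Coprod.inl a * Coprod.inr b * (Coprod.inl a)⁻¹}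

lemma inr_mem_closure_genSet (b : B) :
    Coprod.inr b ∈ Subgroup.closure (genSet A B) :=
  Subgroup.subset_closure ⟨1, b, by simp⟩

lemma conj_mem_closure_genSet (g : Coprod A B) :
    ∀ x ∈ Subgroup.closure (genSet A B),
      g * x * g⁻¹ ∈ Subgroup.closure (genSet A B) := by
  induction g using Coprod.induction_on with
  | inl a =>
    intro x hx
    induction hx using Subgroup.closure_induction with
    | mem y hy =>
      obtain ⟨a', b, rfl⟩ := hy
      refine Subgroup.subset_closure ⟨a * a', b, ?_⟩
      simp [mul_assoc, map_mul]
    | one => simpa using one_mem _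
    | mul y z hy hz py pz =>
      have : Coprod.inl a * (y * z) * (Coprod.inl a)⁻¹ =
          (Coprod.inl a * y * (Coprod.inl a)⁻¹) * (Coprod.inl a * z * (Coprod.inl a)⁻¹) := by
        group
      rw [this]; exact mul_mem py pz
    | inv y hy py =>
      have : Coprod.inl a * y⁻¹ * (Coprod.inl a)⁻¹ =
          (Coprod.inl a * y * (Coprod.inl a)⁻¹)⁻¹ := by group
      rw [this]; exact inv_mem py
  | inr b =>
    intro x hx
    exact mul_mem (mul_mem (inr_mem_closure_genSet b) hx)
      (inv_mem (inr_mem_closure_genSet b))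
  | mul g₁ g₂ h₁ h₂ =>
    intro x hx
    have : g₁ * g₂ * x * (g₁ * g₂)⁻¹ = g₁ * (g₂ * x * g₂⁻¹) * g₁⁻¹ := by group
    rw [this]; exact h₁ _ (h₂ _ hx)

lemma closure_genSet_normal : (Subgroup.closure (genSet A B)).Normal :=
  ⟨fun x hx g => conj_mem_closure_genSet g x hx⟩

lemma ker_fst_le_closure_genSet :
    (Coprod.fst : Coprod A B →* A).ker ≤ Subgroup.closure (genSet A B) := by
  intro x hx
  letI : (Subgroup.closure (genSet A B)).Normal := closure_genSet_normal
  set π := QuotientGroup.mk' (Subgroup.closure (genSet A B)) with hπ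
  have hcomp : π = (π.comp Coprod.inl).comp (Coprod.fst) := by
    apply Coprod.hom_ext
    · rfl
    · ext b
      have h1 : π (Coprod.inr b) = 1 := by
        rw [hπ]
        exact (QuotientGroup.eq_one_iff _).2 (inr_mem_closure_genSet b)
      simpa using h1
  have hx1 : π x = 1 := by
    rw [hcomp]
    simp [MonoidHom.mem_ker.1 hx]
  exact (QuotientGroup.eq_one_iff _).1 hx1

lemma closure_genSet_le_ker :
    Subgroup.closure (genSet A B) ≤ (Coprod.fst : Coprod A B →* A).ker := by
  rw [Subgroup.closure_le]
  rintro x ⟨a, b, rfl⟩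
  simp [MonoidHom.mem_ker]

lemma hom_ext_ker {H : Type*} [Group H]
    (φ ψ : ((Coprod.fst : Coprod A B →* A).ker) →* H)
    (hgen : ∀ (a : A) (b : B)
      (h : Coprod.inl a * Coprod.inr b * (Coprod.inl a)⁻¹ ∈ (Coprod.fst : Coprod A B →* A).ker),
      φ ⟨_, h⟩ = ψ ⟨_, h⟩) : φ = ψ := by
  ext ⟨x, hx⟩
  have hx' : x ∈ Subgroup.closure (genSet A B) := ker_fst_le_closure_genSet hx
  revert hx
  induction hx' using Subgroup.closure_induction with
  | mem y hy =>
    obtain ⟨a, b, rfl⟩ := hy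
    intro h; exact hgen a b h
  | one =>
    intro h
    have : (⟨1, h⟩ : (Coprod.fst : Coprod A B →* A).ker) = 1 := rfl
    rw [this, map_one, map_one]
  | mul y z hy hz py pz =>
    intro h
    have hy' : y ∈ (Coprod.fst : Coprod A B →* A).ker := closure_genSet_le_ker hy
    have hz' : z ∈ (Coprod.fst : Coprod A B →* A).ker := closure_genSet_le_ker hz
    have : (⟨y * z, h⟩ : (Coprod.fst : Coprod A B →* A).ker) = ⟨y, hy'⟩ * ⟨z, hz'⟩ := rfl
    rw [this, map_mul, map_mul, py hy', pz hz']
  | inv y hy py =>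
    intro h
    have hy' : y ∈ (Coprod.fst : Coprod A B →* A).ker := closure_genSet_le_ker hy
    have : (⟨y⁻¹, h⟩ : (Coprod.fst : Coprod A B →* A).ker) = (⟨y, hy'⟩)⁻¹ := rfl
    rw [this, map_inv, map_inv, py hy']

end Aux


/-- The quotient map `q : M ∗ N → M ⋈ N` onto the Peiffer product is the
coequalizer of the two homomorphisms `(N ♭ M) ∗ (M ♭ N) ⇉ M ∗ N` given on the
free factors by the subgroup inclusions `k_{N,M}`, `k_{M,N}` on one hand, and
by the action maps `ξᴺ_M : N ♭ M → M ⊆ M ∗ N`, `ξᴹ_N : M ♭ N → N ⊆ M ∗ N` on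
the other. -/

theorem stmt7 (M N : Type) [Group M] [Group N]
    (ξ : N →* MulAut M) (ξ' : M →* MulAut N)
    (hc1 : ∀ (m m' : M) (n : N), ξ (ξ' m n) m' = m * ξ n (m⁻¹ * m' * m) * m⁻¹)
    (hc2 : ∀ (m : M) (n n' : N), ξ' (ξ n m) n' = n * ξ' m (n⁻¹ * n' * n) * n⁻¹)
    -- the action map `ξᴺ_M : N ♭ M → M`, sending a generator `n m n⁻¹` to `ⁿm`
    (ξNM : (Coprod.fst : Coprod N M →* N).ker →* M)
    (hξNM : ∀ (n : N) (m : M)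
      (h : Coprod.inl n * Coprod.inr m * (Coprod.inl n)⁻¹ ∈ (Coprod.fst : Coprod N M →* N).ker),
      ξNM ⟨Coprod.inl n * Coprod.inr m * (Coprod.inl n)⁻¹, h⟩ = ξ n m)
    -- the action map `ξᴹ_N : M ♭ N → N`, sending a generator `m n m⁻¹` to `ᵐn`
    (ξMN : (Coprod.fst : Coprod M N →* M).ker →* N)
    (hξMN : ∀ (m : M) (n : N)
      (h : Coprod.inl m * Coprod.inr n * (Coprod.inl m)⁻¹ ∈ (Coprod.fst : Coprod M N →* M).ker),
      ξMN ⟨Coprod.inl m * Coprod.inr n * (Coprod.inl m)⁻¹, h⟩ = ξ' m n) :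
    -- `f1` : induced by the subgroup inclusions, `f2` : induced by the action maps
    letI f1 : Coprod ((Coprod.fst : Coprod N M →* N).ker) ((Coprod.fst : Coprod M N →* M).ker)
        →* Coprod M N :=
      Coprod.lift ((Coprod.swap N M).comp (Subgroup.subtype _)) (Subgroup.subtype _)
    letI f2 : Coprod ((Coprod.fst : Coprod N M →* N).ker) ((Coprod.fst : Coprod M N →* M).ker)
        →* Coprod M N :=
      Coprod.lift ((Coprod.inl : M →* Coprod M N).comp ξNM)
        ((Coprod.inr : N →* Coprod M N).comp ξMN)
    (QuotientGroup.mk' (peifferSub M N ξ ξ')).comp f1 =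
      (QuotientGroup.mk' (peifferSub M N ξ ξ')).comp f2 ∧
    ∀ (H : Type) [Group H] (g : Coprod M N →* H), g.comp f1 = g.comp f2 →
      ∃! h : (Coprod M N ⧸ peifferSub M N ξ ξ') →* H,
        h.comp (QuotientGroup.mk' (peifferSub M N ξ ξ')) = g := by

  set K := peifferSub M N ξ ξ' with hK
  have hmem1 : ∀ (m : M) (n : N),
      Coprod.inl (ξ n m) * Coprod.inr n * (Coprod.inl m)⁻¹ * (Coprod.inr n)⁻¹ ∈ K :=
    fun m n => Subgroup.subset_normalClosure (Or.inl ⟨m, n, rfl⟩)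
  have hmem2 : ∀ (m : M) (n : N),
      Coprod.inr (ξ' m n) * Coprod.inl m * (Coprod.inr n)⁻¹ * (Coprod.inl m)⁻¹ ∈ K :=
    fun m n => Subgroup.subset_normalClosure (Or.inr ⟨m, n, rfl⟩)
  constructor
  · apply Coprod.hom_ext
    · rw [MonoidHom.comp_assoc, MonoidHom.comp_assoc]
      simp only [Coprod.lift_comp_inl]
      apply hom_ext_ker
      intro n m h
      simp only [MonoidHom.comp_apply, Subgroup.coe_subtype, hξNM n m h]
      rw [QuotientGroup.mk'_apply, QuotientGroup.mk'_apply, QuotientGroup.eq]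
      have := (peifferSub_normal M N ξ ξ').conj_mem _ (hmem1 m n) (Coprod.inl (ξ n m))⁻¹
      convert this using 1
      simp only [map_mul, map_inv, Coprod.swap_inl, Coprod.swap_inr]
      group
    · rw [MonoidHom.comp_assoc, MonoidHom.comp_assoc]
      simp only [Coprod.lift_comp_inr]
      apply hom_ext_ker
      intro m n h
      simp only [MonoidHom.comp_apply, Subgroup.coe_subtype, hξMN m n h]
      rw [QuotientGroup.mk'_apply, QuotientGroup.mk'_apply, QuotientGroup.eq]
      have := (peifferSub_normal M N ξ ξ').conj_mem _ (hmem2 m n) (Coprod.inr (ξ' m n))⁻¹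
      convert this using 1
      group
  · intro H _ g hg
    have hKker : K ≤ g.ker := by
      rw [hK, peifferSub]
      apply Subgroup.normalClosure_le_normal
      rintro x (⟨m, n, rfl⟩ | ⟨m, n, rfl⟩)
      · have hker : Coprod.inl n * Coprod.inr m * (Coprod.inl n)⁻¹ ∈
            (Coprod.fst : Coprod N M →* N).ker := by
          simp [MonoidHom.mem_ker]
        have h1 := DFunLike.congr_fun hg
          (Coprod.inl (⟨_, hker⟩ : (Coprod.fst : Coprod N M →* N).ker))
        simp only [MonoidHom.comp_apply, Coprod.lift_apply_inl,
          Subgroup.coe_subtype, hξNM n m hker, map_mul, map_inv,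
          Coprod.swap_inl, Coprod.swap_inr] at h1
        simp only [SetLike.mem_coe, MonoidHom.mem_ker, map_mul, map_inv, ← h1]
        group
      · have hker : Coprod.inl m * Coprod.inr n * (Coprod.inl m)⁻¹ ∈
            (Coprod.fst : Coprod M N →* M).ker := by
          simp [MonoidHom.mem_ker]
        have h1 := DFunLike.congr_fun hg
          (Coprod.inr (⟨_, hker⟩ : (Coprod.fst : Coprod M N →* M).ker))
        simp only [MonoidHom.comp_apply, Coprod.lift_apply_inr,
          Subgroup.coe_subtype, hξMN m n hker, map_mul, map_inv] at h1
        simp only [SetLike.mem_coe, MonoidHom.mem_ker, map_mul, map_inv, ← h1]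
        group
    refine ⟨QuotientGroup.lift K g (fun x hx => MonoidHom.mem_ker.1 (hKker hx)), ?_, ?_⟩
    · exact MonoidHom.ext fun x => QuotientGroup.lift_mk' K (fun x hx => MonoidHom.mem_ker.1 (hKker hx)) x
    · intro h' hh'
      refine MonoidHom.ext fun q => ?_
      obtain ⟨x, rfl⟩ := QuotientGroup.mk'_surjective K q
      have h2 := DFunLike.congr_fun hh' x
      simp only [MonoidHom.comp_apply] at h2
      exact h2.trans (QuotientGroup.lift_mk' K (fun x hx => MonoidHom.mem_ker.1 (hKker hx)) x).symm
end

section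
/- Let M and N be groups acting compatibly on each other, with Peiffer product M ⋈ N = (M * N)/K and induced actions of M ⋈ N on M and on N (well defined since K acts trivially). Then the composite l_M : M → M * N → M ⋈ N, together with the induced action of M ⋈ N on M, is a crossed module: (1) for all m, m' ∈ M, the action of l_M(m') on m is conjugation m'·m·m'⁻¹; and (2) for all x ∈ M ⋈ N and m ∈ M, l_M(the action of x on m) = x·l_M(m)·x⁻¹. -/
open Monoid

/-- For compatible actions, the canonical map `l_M : M → M ⋈ N`, together with
the induced action `ψ` of the Peiffer product `M ⋈ N` on `M` (well defined
since `K` acts trivially, i.e. `ψ ∘ q` is the induced action of `M ∗ N` on `M`),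
is a crossed module: the Peiffer condition and the precrossed module condition hold. -/
theorem stmt8 (M N : Type) [Group M] [Group N]
    (ξ : N →* MulAut M) (ξ' : M →* MulAut N)
    (hc1 : ∀ (m m' : M) (n : N), ξ (ξ' m n) m' = m * ξ n (m⁻¹ * m' * m) * m⁻¹)
    (hc2 : ∀ (m : M) (n n' : N), ξ' (ξ n m) n' = n * ξ' m (n⁻¹ * n' * n) * n⁻¹)
    (ψ : (Coprod M N ⧸ peifferSub M N ξ ξ') →* MulAut M)
    (hψ : ∀ w : Coprod M N,
      ψ (QuotientGroup.mk' (peifferSub M N ξ ξ') w) =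
        Coprod.lift (MulAut.conj : M →* MulAut M) ξ w) :
    (∀ m m' : M,
      ψ (QuotientGroup.mk' (peifferSub M N ξ ξ') (Coprod.inl m')) m = m' * m * m'⁻¹) ∧
    (∀ (x : Coprod M N ⧸ peifferSub M N ξ ξ') (m : M),
      QuotientGroup.mk' (peifferSub M N ξ ξ') (Coprod.inl (ψ x m)) =
        x * QuotientGroup.mk' (peifferSub M N ξ ξ') (Coprod.inl m) * x⁻¹) := by
  constructor
  · intro m m'
    rw [hψ]
    simp
  · have key : ∀ (w : Coprod M N) (m : M),
        (QuotientGroup.mk' (peifferSub M N ξ ξ') (Coprod.inl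
          (Coprod.lift (MulAut.conj : M →* MulAut M) ξ w m)) : _) =
        QuotientGroup.mk' (peifferSub M N ξ ξ') w *
          QuotientGroup.mk' (peifferSub M N ξ ξ') (Coprod.inl m) *
          (QuotientGroup.mk' (peifferSub M N ξ ξ') w)⁻¹ := by
      intro w
      induction w using Coprod.induction_on with
      | inl m' =>
        intro m
        simp only [Coprod.lift_apply_inl, MulAut.conj_apply, ← map_mul, ← map_inv]
      | inr n =>
        intro m
        simp only [Coprod.lift_apply_inr]
        have hg : Coprod.inl (ξ n m) * Coprod.inr n * (Coprod.inl m)⁻¹ * (Coprod.inr n)⁻¹ ∈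
            peifferSub M N ξ ξ' :=
          Subgroup.subset_normalClosure (Set.mem_union_left _ ⟨m, n, rfl⟩)
        have hz : (Coprod.inl (ξ n m))⁻¹ *
            (Coprod.inl (ξ n m) * Coprod.inr n * (Coprod.inl m)⁻¹ * (Coprod.inr n)⁻¹) *
            Coprod.inl (ξ n m) ∈ peifferSub M N ξ ξ' :=
          (peifferSub_normal M N ξ ξ').conj_mem' _ hg _
        rw [eq_comm, ← map_inv, ← map_mul, ← map_mul, QuotientGroup.mk'_eq_mk']
        refine ⟨_, hz, ?_⟩
        group
      | mul x y hx hy =>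
        intro m
        simp only [map_mul, MulAut.mul_apply]
        rw [hx, hy]
        group
    intro x m
    refine QuotientGroup.induction_on x fun w => ?_
    have h2 : ψ (QuotientGroup.mk' (peifferSub M N ξ ξ') w) m
        = Coprod.lift (MulAut.conj : M →* MulAut M) ξ w m := by rw [hψ w]
    rw [QuotientGroup.mk'_apply] at h2 ⊢
    rw [h2]
    exact key w m
end

section
/- Two groups M and N act on each other compatibly if and only if there exists a group L with crossed module structures μ : M → L and ν : N → L such that the mutual actions are induced: ᵐn = ^{μ(m)}n and ⁿm = ^{ν(n)}m for all m ∈ M, n ∈ N. -/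
/-- Two groups `M` and `N` act on each other compatibly if and only if there is a
group `L` with crossed module structures `μ : M → L` and `ν : N → L` inducing the
mutual actions: `ᵐn = ^{μ(m)}n` and `ⁿm = ^{ν(n)}m`. -/
theorem stmt10 (M N : Type) [Group M] [Group N]
    (ξ : N →* MulAut M) (ξ' : M →* MulAut N) :
    ((∀ (m m' : M) (n : N), ξ (ξ' m n) m' = m * ξ n (m⁻¹ * m' * m) * m⁻¹) ∧
     (∀ (m : M) (n n' : N), ξ' (ξ n m) n' = n * ξ' m (n⁻¹ * n' * n) * n⁻¹)) ↔
    ∃ (L : Type) (_ : Group L) (μ : M →* L) (ν : N →* L)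
      (η : L →* MulAut M) (θ : L →* MulAut N),
      (∀ (l : L) (m : M), μ (η l m) = l * μ m * l⁻¹) ∧
      (∀ m m' : M, η (μ m) m' = m * m' * m⁻¹) ∧
      (∀ (l : L) (n : N), ν (θ l n) = l * ν n * l⁻¹) ∧
      (∀ n n' : N, θ (ν n) n' = n * n' * n⁻¹) ∧
      (∀ (m : M) (n : N), ξ' m n = θ (μ m) n) ∧
      (∀ (n : N) (m : M), ξ n m = η (ν n) m) := by
  constructor
  · rintro ⟨h1, h2⟩
    let μ₀ : M →* MulAut M × MulAut N := (MulAut.conj (G := M)).prod ξ'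
    let ν₀ : N →* MulAut M × MulAut N := ξ.prod (MulAut.conj (G := N))
    let K : Subgroup (MulAut M × MulAut N) :=
      Subgroup.closure (Set.range μ₀ ∪ Set.range ν₀)
    have hμ : ∀ m, μ₀ m ∈ K := fun m => Subgroup.subset_closure (Or.inl ⟨m, rfl⟩)
    have hν : ∀ n, ν₀ n ∈ K := fun n => Subgroup.subset_closure (Or.inr ⟨n, rfl⟩)
    -- key equivariance lemmas on all of K
    have key1 : ∀ g ∈ K, ∀ m, μ₀ (g.1 m) = g * μ₀ m * g⁻¹ := by
      intro g hg
      refine Subgroup.closure_induction ?_ ?_ ?_ ?_ hg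
      · rintro x (⟨m₀, rfl⟩ | ⟨n₀, rfl⟩)
        · intro m
          have : (μ₀ m₀).1 m = m₀ * m * m₀⁻¹ := rfl
          rw [this]
          simp [map_mul, map_inv]
        · intro m
          refine Prod.ext ?_ ?_
          · ext x
            show MulAut.conj (ξ n₀ m) x = ξ n₀ (MulAut.conj m ((ξ n₀)⁻¹ x))
            simp [MulAut.conj_apply, map_mul, map_inv]
          · ext y
            show ξ' (ξ n₀ m) y = MulAut.conj n₀ (ξ' m ((MulAut.conj n₀)⁻¹ y))
            simp only [MulAut.conj_apply, MulAut.conj_inv_apply]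
            rw [h2 m n₀ y]
      · intro m; simp
      · intro a b _ _ ha hb m
        show μ₀ ((a.1 * b.1) m) = _
        rw [MulAut.mul_apply, ha, hb]
        group
      · intro a _ ha m
        have h0 := ha (a.1⁻¹ m)
        rw [show a.1 ((a.1)⁻¹ m) = m from MulAut.apply_inv_self _ a.1 m] at h0
        show μ₀ ((a.1)⁻¹ m) = a⁻¹ * μ₀ m * a⁻¹⁻¹
        rw [inv_inv, h0]
        group
    have key2 : ∀ g ∈ K, ∀ n, ν₀ (g.2 n) = g * ν₀ n * g⁻¹ := by
      intro g hg
      refine Subgroup.closure_induction ?_ ?_ ?_ ?_ hg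
      · rintro x (⟨m₀, rfl⟩ | ⟨n₀, rfl⟩)
        · intro n
          refine Prod.ext ?_ ?_
          · ext x
            show ξ (ξ' m₀ n) x = MulAut.conj m₀ (ξ n ((MulAut.conj m₀)⁻¹ x))
            simp only [MulAut.conj_apply, MulAut.conj_inv_apply]
            rw [h1 m₀ x n]
          · ext y
            show MulAut.conj (ξ' m₀ n) y = ξ' m₀ (MulAut.conj n ((ξ' m₀)⁻¹ y))
            simp [MulAut.conj_apply, map_mul, map_inv]
        · intro n
          have : (ν₀ n₀).2 n = n₀ * n * n₀⁻¹ := rfl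
          rw [this]
          simp [map_mul, map_inv]
      · intro n; simp
      · intro a b _ _ ha hb n
        show ν₀ ((a.2 * b.2) n) = _
        rw [MulAut.mul_apply, ha, hb]
        group
      · intro a _ ha n
        have h0 := ha (a.2⁻¹ n)
        rw [show a.2 ((a.2)⁻¹ n) = n from MulAut.apply_inv_self _ a.2 n] at h0
        show ν₀ ((a.2)⁻¹ n) = a⁻¹ * ν₀ n * a⁻¹⁻¹
        rw [inv_inv, h0]
        group
    refine ⟨K, inferInstance, μ₀.codRestrict K hμ, ν₀.codRestrict K hν,
      (MonoidHom.fst _ _).comp K.subtype, (MonoidHom.snd _ _).comp K.subtype,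
      ?_, ?_, ?_, ?_, ?_, ?_⟩
    · rintro ⟨g, hg⟩ m
      exact Subtype.ext (key1 g hg m)
    · intro m m'
      exact MulAut.conj_apply m m'
    · rintro ⟨g, hg⟩ n
      exact Subtype.ext (key2 g hg n)
    · intro n n'
      exact MulAut.conj_apply n n'
    · intro m n; rfl
    · intro n m; rfl
  · rintro ⟨L, _, μ, ν, η, θ, hμ, hη, hν, hθ, hξ', hξ⟩
    have hηinv : ∀ (m m' : M), (η (μ m))⁻¹ m' = m⁻¹ * m' * m := by
      intro m m'
      have h := hη m (m⁻¹ * m' * m)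
      have h2 : η (μ m) (m⁻¹ * m' * m) = m' := by rw [h]; group
      calc (η (μ m))⁻¹ m' = (η (μ m))⁻¹ (η (μ m) (m⁻¹ * m' * m)) := by rw [h2]
        _ = m⁻¹ * m' * m := MulAut.inv_apply_self _ _ _
    have hθinv : ∀ (n n' : N), (θ (ν n))⁻¹ n' = n⁻¹ * n' * n := by
      intro n n'
      have h2 : θ (ν n) (n⁻¹ * n' * n) = n' := by rw [hθ]; group
      calc (θ (ν n))⁻¹ n' = (θ (ν n))⁻¹ (θ (ν n) (n⁻¹ * n' * n)) := by rw [h2]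
        _ = n⁻¹ * n' * n := MulAut.inv_apply_self _ _ _
    constructor
    · intro m m' n
      rw [hξ (ξ' m n) m', hξ' m n, hν (μ m) n, map_mul, map_mul, map_inv,
        MulAut.mul_apply, MulAut.mul_apply, hηinv, ← hξ, hη]
    · intro m n n'
      rw [hξ' (ξ n m) n', hξ n m, hμ (ν n) m, map_mul, map_mul, map_inv,
        MulAut.mul_apply, MulAut.mul_apply, hθinv, ← hξ', hθ]
end

section
/- Let M and N be groups acting compatibly on each other, with Peiffer product M ⋈ N and canonical maps l_M : M → M ⋈ N, l_N : N → M ⋈ N. Given any group L with crossed module structures μ : M → L, ν : N → L inducing the given mutual actions (ᵐn = ^{μ(m)}n and ⁿm = ^{ν(n)}m), there exists a unique homomorphism φ : M ⋈ N → L with φ ∘ l_M = μ and φ ∘ l_N = ν. -/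
open Monoid

/-- Universal property of the Peiffer product: given compatible actions of `M`
and `N` on each other and any group `L` with crossed module structures
`μ : M → L`, `ν : N → L` inducing the given mutual actions, there is a unique
homomorphism `φ : M ⋈ N → L` with `φ ∘ l_M = μ` and `φ ∘ l_N = ν`. -/
theorem stmt11 (M N : Type) [Group M] [Group N]
    (ξ : N →* MulAut M) (ξ' : M →* MulAut N)
    (hc1 : ∀ (m m' : M) (n : N), ξ (ξ' m n) m' = m * ξ n (m⁻¹ * m' * m) * m⁻¹)
    (hc2 : ∀ (m : M) (n n' : N), ξ' (ξ n m) n' = n * ξ' m (n⁻¹ * n' * n) * n⁻¹)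
    (L : Type) [Group L]
    (μ : M →* L) (ν : N →* L) (η : L →* MulAut M) (θ : L →* MulAut N)
    (hμ1 : ∀ (l : L) (m : M), μ (η l m) = l * μ m * l⁻¹)
    (hμ2 : ∀ m m' : M, η (μ m) m' = m * m' * m⁻¹)
    (hν1 : ∀ (l : L) (n : N), ν (θ l n) = l * ν n * l⁻¹)
    (hν2 : ∀ n n' : N, θ (ν n) n' = n * n' * n⁻¹)
    (hind1 : ∀ (n : N) (m : M), ξ n m = η (ν n) m)
    (hind2 : ∀ (m : M) (n : N), ξ' m n = θ (μ m) n) :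
    ∃! φ : (Coprod M N ⧸ peifferSub M N ξ ξ') →* L,
      (∀ m : M, φ (QuotientGroup.mk' (peifferSub M N ξ ξ') (Coprod.inl m)) = μ m) ∧
      (∀ n : N, φ (QuotientGroup.mk' (peifferSub M N ξ ξ') (Coprod.inr n)) = ν n) := by
  classical
  set f : Coprod M N →* L := Coprod.lift μ ν with hf
  have hker : peifferSub M N ξ ξ' ≤ f.ker := by
    refine Subgroup.normalClosure_le_normal ?_
    rintro x (⟨m, n, rfl⟩ | ⟨m, n, rfl⟩) <;>
      simp only [hf, SetLike.mem_coe, MonoidHom.mem_ker, map_mul, map_inv, Coprod.lift_apply_inl,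
        Coprod.lift_apply_inr]
    · rw [hind1, hμ1]
      group
    · rw [hind2, hν1]
      group
  refine ⟨QuotientGroup.lift _ f hker, ⟨?_, ?_⟩, ?_⟩
  · intro m; simp [hf]
  · intro n; simp [hf]
  · rintro ψ ⟨h1, h2⟩
    refine MonoidHom.ext fun x => ?_
    obtain ⟨z, rfl⟩ := QuotientGroup.mk_surjective x
    induction z using Coprod.induction_on with
    | inl m => simpa [hf] using h1 m
    | inr n => simpa [hf] using h2 n
    | mul x y hx hy =>
      rw [show ((x * y : Coprod M N) : Coprod M N ⧸ peifferSub M N ξ ξ') =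
        (x : Coprod M N ⧸ _) * (y : Coprod M N ⧸ _) from rfl, map_mul, map_mul, hx, hy]
end

section
/- Let M and N be groups acting on each other (not necessarily compatibly), and form the semidirect products M ⋊ N (via the action of N on M) and N ⋊ M (via the action of M on N). Then the Peiffer product M ⋈ N, defined as the quotient of M * N by the normal closure of {(ⁿm)·n·m⁻¹·n⁻¹, (ᵐn)·m·n⁻¹·m⁻¹}, together with the induced quotient maps from M ⋊ N and N ⋊ M, is the pushout in the category of groups of the two canonical surjections σ₁ : M * N → M ⋊ N and σ₂ : M * N → N ⋊ M. -/
open Monoid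

private lemma conj_aux {G : Type*} [Group G] {a b c : G}
    (h : a * b * c⁻¹ * b⁻¹ = 1) : a = b * c * b⁻¹ := by
  have h' : a * (b * c⁻¹ * b⁻¹) = 1 := by simpa [mul_assoc] using h
  rw [← mul_inv_eq_one]
  simpa [mul_inv_rev, mul_assoc] using h'

/-- The Peiffer product `M ⋈ N = (M ∗ N) ⧸ K`, with the induced quotient maps
from `M ⋊ N` and `N ⋊ M`, is the pushout in the category of groups of the two
canonical surjections `σ₁ : M ∗ N → M ⋊ N` and `σ₂ : M ∗ N → N ⋊ M`
(no compatibility of the actions is required). -/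
theorem stmt12 (M N : Type) [Group M] [Group N]
    (ξ : N →* MulAut M) (ξ' : M →* MulAut N) :
    letI σ₁ : Coprod M N →* M ⋊[ξ] N :=
      Coprod.lift SemidirectProduct.inl SemidirectProduct.inr
    letI σ₂ : Coprod M N →* N ⋊[ξ'] M :=
      Coprod.lift SemidirectProduct.inr SemidirectProduct.inl
    ∃ (p₁ : (M ⋊[ξ] N) →* (Coprod M N ⧸ peifferSub M N ξ ξ'))
      (p₂ : (N ⋊[ξ'] M) →* (Coprod M N ⧸ peifferSub M N ξ ξ')),
      p₁.comp σ₁ = QuotientGroup.mk' (peifferSub M N ξ ξ') ∧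
      p₂.comp σ₂ = QuotientGroup.mk' (peifferSub M N ξ ξ') ∧
      ∀ (H : Type) [Group H] (f₁ : (M ⋊[ξ] N) →* H) (f₂ : (N ⋊[ξ'] M) →* H),
        f₁.comp σ₁ = f₂.comp σ₂ →
        ∃! h : (Coprod M N ⧸ peifferSub M N ξ ξ') →* H,
          h.comp p₁ = f₁ ∧ h.comp p₂ = f₂ := by
  set σ₁ : Coprod M N →* M ⋊[ξ] N :=
    Coprod.lift SemidirectProduct.inl SemidirectProduct.inr with hσ₁
  set σ₂ : Coprod M N →* N ⋊[ξ'] M :=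
    Coprod.lift SemidirectProduct.inr SemidirectProduct.inl with hσ₂
  set K := peifferSub M N ξ ξ' with hK
  set mkq := QuotientGroup.mk' K with hmkq
  -- the two induced maps
  have hmem1 : ∀ (m : M) (n : N),
      Coprod.inl (ξ n m) * Coprod.inr n * (Coprod.inl m)⁻¹ * (Coprod.inr n)⁻¹ ∈ K :=
    fun m n => Subgroup.subset_normalClosure (Or.inl ⟨m, n, rfl⟩)
  have hmem2 : ∀ (m : M) (n : N),
      Coprod.inr (ξ' m n) * Coprod.inl m * (Coprod.inr n)⁻¹ * (Coprod.inl m)⁻¹ ∈ K :=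
    fun m n => Subgroup.subset_normalClosure (Or.inr ⟨m, n, rfl⟩)
  have hc1 : ∀ (n : N), (mkq.comp Coprod.inl).comp (ξ n).toMonoidHom =
      (MulAut.conj ((mkq.comp Coprod.inr) n)).toMonoidHom.comp (mkq.comp Coprod.inl) := by
    intro n
    ext m
    simp only [MonoidHom.comp_apply, MulEquiv.coe_toMonoidHom, MulAut.conj_apply]
    apply conj_aux
    have h1 : mkq (Coprod.inl (ξ n m) * Coprod.inr n * (Coprod.inl m)⁻¹ * (Coprod.inr n)⁻¹)
        = 1 := (QuotientGroup.eq_one_iff _).mpr (hmem1 m n)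
    simpa using h1
  have hc2 : ∀ (m : M), (mkq.comp Coprod.inr).comp (ξ' m).toMonoidHom =
      (MulAut.conj ((mkq.comp Coprod.inl) m)).toMonoidHom.comp (mkq.comp Coprod.inr) := by
    intro m
    ext n
    simp only [MonoidHom.comp_apply, MulEquiv.coe_toMonoidHom, MulAut.conj_apply]
    apply conj_aux
    have h2 : mkq (Coprod.inr (ξ' m n) * Coprod.inl m * (Coprod.inr n)⁻¹ * (Coprod.inl m)⁻¹)
        = 1 := (QuotientGroup.eq_one_iff _).mpr (hmem2 m n)
    simpa using h2
  refine ⟨SemidirectProduct.lift (mkq.comp Coprod.inl) (mkq.comp Coprod.inr) hc1,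
    SemidirectProduct.lift (mkq.comp Coprod.inr) (mkq.comp Coprod.inl) hc2, ?_, ?_, ?_⟩
  · exact Coprod.hom_ext (by ext m; simp [hσ₁]) (by ext n; simp [hσ₁])
  · exact Coprod.hom_ext (by ext m; simp [hσ₂]) (by ext n; simp [hσ₂])
  · intro H _ f₁ f₂ hf
    set F : Coprod M N →* H := f₁.comp σ₁ with hF
    have hFker : K ≤ F.ker := by
      apply Subgroup.normalClosure_le_normal
      rintro x (⟨m, n, rfl⟩ | ⟨m, n, rfl⟩)
      · show F _ = 1
        rw [hF]
        simp [hσ₁, SemidirectProduct.inl_aut, mul_assoc]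
      · show F _ = 1
        rw [hf]
        simp [hσ₂, SemidirectProduct.inl_aut, mul_assoc]
    have hlift : ∀ x : Coprod M N,
        QuotientGroup.lift K F hFker (mkq x) = F x := fun x => rfl
    refine ⟨QuotientGroup.lift K F hFker, ⟨?_, ?_⟩, ?_⟩
    · apply SemidirectProduct.hom_ext
      · ext m
        simp only [MonoidHom.comp_apply, SemidirectProduct.lift_inl]
        rw [hlift, hF]; simp [hσ₁]
      · ext n
        simp only [MonoidHom.comp_apply, SemidirectProduct.lift_inr]
        rw [hlift, hF]; simp [hσ₁]
    · apply SemidirectProduct.hom_ext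
      · ext n
        simp only [MonoidHom.comp_apply, SemidirectProduct.lift_inl]
        rw [hlift, hf]; simp [hσ₂]
      · ext m
        simp only [MonoidHom.comp_apply, SemidirectProduct.lift_inr]
        rw [hlift, hf]; simp [hσ₂]
    · rintro h' ⟨h1, h2⟩
      have e1 : (SemidirectProduct.lift (mkq.comp Coprod.inl)
          (mkq.comp Coprod.inr) hc1).comp σ₁ = mkq :=
        Coprod.hom_ext (by ext m; simp [hσ₁]) (by ext n; simp [hσ₁])
      have h3 : h'.comp mkq = F := by
        rw [← e1, ← MonoidHom.comp_assoc, h1, hF]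
      refine MonoidHom.ext fun x => ?_
      obtain ⟨y, rfl⟩ := QuotientGroup.mk'_surjective K x
      calc h' ((QuotientGroup.mk' K) y) = F y := DFunLike.congr_fun h3 y
        _ = QuotientGroup.lift K F hFker ((QuotientGroup.mk' K) y) := (hlift y).symm
end

section
/- Let M and N be groups with N acting on M. Then σ : M * N → M ⋊ N (sending m to (m,1) and n to (1,n)) is the coequalizer of the two homomorphisms N♭M ⇉ M * N given by the inclusion k : N♭M ↪ M * N (where N♭M is generated by words n m n⁻¹) and by the composition of the action map ξ : N♭M → M, (n m n⁻¹) ↦ ⁿm, with the inclusion M ↪ M * N. -/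
open Monoid

namespace Stmt13Aux

variable {M N : Type} [Group M] [Group N]

/-- The set of conjugates `n m n⁻¹`. -/
def S (M N : Type) [Group M] [Group N] : Set (Coprod M N) :=
  {x | ∃ (n : N) (m : M), x = Coprod.inr n * Coprod.inl m * (Coprod.inr n)⁻¹}

lemma inl_mem_closure (m : M) : (Coprod.inl m : Coprod M N) ∈ Subgroup.closure (S M N) := by
  apply Subgroup.subset_closure
  exact ⟨1, m, by simp⟩

lemma conj_mem {k : Coprod M N} (t : N) (hk : k ∈ Subgroup.closure (S M N)) :
    Coprod.inr t * k * (Coprod.inr t)⁻¹ ∈ Subgroup.closure (S M N) := by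
  induction hk using Subgroup.closure_induction with
  | mem x hx =>
    obtain ⟨n, m, rfl⟩ := hx
    apply Subgroup.subset_closure
    exact ⟨t * n, m, by simp [mul_assoc]⟩
  | one => simpa using Subgroup.one_mem _
  | mul x y hx hy ihx ihy =>
    have : Coprod.inr t * (x * y) * (Coprod.inr t)⁻¹ =
        (Coprod.inr t * x * (Coprod.inr t)⁻¹) * (Coprod.inr t * y * (Coprod.inr t)⁻¹) := by
      group
    rw [this]; exact Subgroup.mul_mem _ ihx ihy
  | inv x hx ihx =>
    have : Coprod.inr t * x⁻¹ * (Coprod.inr t)⁻¹ =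
        (Coprod.inr t * x * (Coprod.inr t)⁻¹)⁻¹ := by group
    rw [this]; exact Subgroup.inv_mem _ ihx

lemma key (x : Coprod M N) :
    x * (Coprod.inr (Coprod.snd x) : Coprod M N)⁻¹ ∈ Subgroup.closure (S M N) := by
  induction x using Coprod.induction_on with
  | inl m => simpa using inl_mem_closure m
  | inr n => simp
  | mul x y hx hy =>
    have hxy : x * y * (Coprod.inr (Coprod.snd (x * y)) : Coprod M N)⁻¹ =
        (x * (Coprod.inr (Coprod.snd x))⁻¹) *
        (Coprod.inr (Coprod.snd x) * (y * (Coprod.inr (Coprod.snd y))⁻¹) *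
          (Coprod.inr (Coprod.snd x))⁻¹) := by
      simp only [map_mul]
      group
    rw [hxy]
    exact Subgroup.mul_mem _ hx (conj_mem _ hy)

lemma ker_eq :
    (Coprod.snd : Coprod M N →* N).ker = Subgroup.closure (S M N) := by
  apply le_antisymm
  · intro x hx
    have := key x
    rw [MonoidHom.mem_ker] at hx
    simpa [hx] using this
  · rw [Subgroup.closure_le]
    rintro x ⟨n, m, rfl⟩
    simp [MonoidHom.mem_ker]

end Stmt13Aux

/-- For groups `M`, `N` with `N` acting on `M` via `ξ`, the canonical map
`σ : M ∗ N → M ⋊ N` is the coequalizer of the two homomorphisms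
`N ♭ M ⇉ M ∗ N` given by the subgroup inclusion `k : N ♭ M ↪ M ∗ N` and by the
action map `ξᴺ_M : N ♭ M → M`, `n m n⁻¹ ↦ ⁿm`, followed by the inclusion of `M`.
Here `N ♭ M` is the kernel of the map `M ∗ N → N` killing `M`. -/
theorem stmt13 (M N : Type) [Group M] [Group N] (ξ : N →* MulAut M)
    (ξNM : (Coprod.snd : Coprod M N →* N).ker →* M)
    (hξNM : ∀ (n : N) (m : M)
      (h : Coprod.inr n * Coprod.inl m * (Coprod.inr n)⁻¹ ∈ (Coprod.snd : Coprod M N →* N).ker),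
      ξNM ⟨Coprod.inr n * Coprod.inl m * (Coprod.inr n)⁻¹, h⟩ = ξ n m) :
    letI σ : Coprod M N →* M ⋊[ξ] N :=
      Coprod.lift SemidirectProduct.inl SemidirectProduct.inr
    σ.comp (Coprod.snd : Coprod M N →* N).ker.subtype =
      σ.comp ((Coprod.inl : M →* Coprod M N).comp ξNM) ∧
    ∀ (H : Type) [Group H] (g : Coprod M N →* H),
      g.comp (Coprod.snd : Coprod M N →* N).ker.subtype =
        g.comp ((Coprod.inl : M →* Coprod M N).comp ξNM) →
      ∃! h : (M ⋊[ξ] N) →* H, h.comp σ = g := by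
  set σ : Coprod M N →* M ⋊[ξ] N := Coprod.lift SemidirectProduct.inl SemidirectProduct.inr with hσ
  have hσ_surj : Function.Surjective σ := by
    intro x
    refine ⟨Coprod.inl x.left * Coprod.inr x.right, ?_⟩
    simp [σ, SemidirectProduct.inl_left_mul_inr_right]
  -- the key pointwise statement for any `g` coequalizing the pair
  have main : ∀ (H : Type) [Group H] (g : Coprod M N →* H),
      (∀ n m, g (Coprod.inr n * Coprod.inl m * (Coprod.inr n)⁻¹) = g (Coprod.inl (ξ n m))) →
      ∀ (x : Coprod M N) (hx : x ∈ (Coprod.snd : Coprod M N →* N).ker),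
        g x = g (Coprod.inl (ξNM ⟨x, hx⟩)) := by
    intro H _ g hg x hx
    rw [Stmt13Aux.ker_eq] at hx
    induction hx using Subgroup.closure_induction with
    | mem y hy =>
      obtain ⟨n, m, rfl⟩ := hy
      rw [hξNM n m]
      exact hg n m
    | one =>
      have : (⟨(1 : Coprod M N), hx⟩ : (Coprod.snd : Coprod M N →* N).ker) = 1 := rfl
      rw [this]
      simp
    | mul y z hy hz ihy ihz =>
      have hy' : y ∈ (Coprod.snd : Coprod M N →* N).ker := by
        rw [Stmt13Aux.ker_eq]; exact hy
      have hz' : z ∈ (Coprod.snd : Coprod M N →* N).ker := by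
        rw [Stmt13Aux.ker_eq]; exact hz
      have heq : (⟨y * z, hx⟩ : (Coprod.snd : Coprod M N →* N).ker) =
          ⟨y, hy'⟩ * ⟨z, hz'⟩ := rfl
      rw [heq, map_mul, map_mul, map_mul, ihy hy', ihz hz', map_mul]
    | inv y hy ihy =>
      have hy' : y ∈ (Coprod.snd : Coprod M N →* N).ker := by
        rw [Stmt13Aux.ker_eq]; exact hy
      have heq : (⟨y⁻¹, hx⟩ : (Coprod.snd : Coprod M N →* N).ker) = (⟨y, hy'⟩)⁻¹ := rfl
      rw [heq, map_inv, map_inv, map_inv, ihy hy', map_inv]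
  have hgen : ∀ (n : N) (m : M),
      σ (Coprod.inr n * Coprod.inl m * (Coprod.inr n)⁻¹) = σ (Coprod.inl (ξ n m)) := by
    intro n m
    simp only [σ, map_mul, map_inv, Coprod.lift_apply_inl, Coprod.lift_apply_inr]
    rw [SemidirectProduct.inl_aut, map_inv]
  constructor
  · refine MonoidHom.ext fun x => ?_
    obtain ⟨x, hx⟩ := x
    simpa using main (M ⋊[ξ] N) σ hgen x hx
  · intro H _ g hg
    have hg' : ∀ n m, g (Coprod.inr n * Coprod.inl m * (Coprod.inr n)⁻¹) =
        g (Coprod.inl (ξ n m)) := by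
      intro n m
      have hmem : Coprod.inr n * Coprod.inl m * (Coprod.inr n)⁻¹ ∈
          (Coprod.snd : Coprod M N →* N).ker := by
        simp [MonoidHom.mem_ker]
      have := DFunLike.congr_fun hg
        (⟨Coprod.inr n * Coprod.inl m * (Coprod.inr n)⁻¹, hmem⟩ :
          (Coprod.snd : Coprod M N →* N).ker)
      simpa [hξNM n m hmem] using this
    have hcompat : ∀ n : N,
        (g.comp Coprod.inl).comp (ξ n).toMonoidHom =
          (MulAut.conj (g.comp Coprod.inr n)).toMonoidHom.comp (g.comp Coprod.inl) := by
      intro n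
      ext m
      simp only [MonoidHom.comp_apply, MulEquiv.coe_toMonoidHom, MulAut.conj_apply]
      rw [← hg' n m]
      simp [mul_assoc]
    refine ⟨SemidirectProduct.lift (g.comp Coprod.inl) (g.comp Coprod.inr) hcompat, ?_, ?_⟩
    · apply Coprod.hom_ext <;> ext x <;>
        simp [σ, SemidirectProduct.lift_inl, SemidirectProduct.lift_inr]
    · intro h hh
      ext x
      obtain ⟨y, rfl⟩ := hσ_surj x
      have h1 := DFunLike.congr_fun hh y
      simp only [MonoidHom.comp_apply] at h1
      rw [h1]
      have : (SemidirectProduct.lift (g.comp Coprod.inl) (g.comp Coprod.inr) hcompat).comp σ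
          = g := by
        apply Coprod.hom_ext <;> ext z <;>
          simp [σ, SemidirectProduct.lift_inl, SemidirectProduct.lift_inr]
      exact (DFunLike.congr_fun this y).symm
end

section
/- Let M and N be groups acting compatibly on each other, and let q : M * N → M ⋈ N be the Peiffer quotient. Then for every word s ∈ M * N and every m ∈ M, q(s·m·s⁻¹) = q(j(φ_M(s)(m))), where φ_M : M * N → Aut(M) is the induced action on M and j : M → M * N is the canonical inclusion. That is, q ∘ conj ∘ (1♭j) = q ∘ j ∘ φ_M on (M*N)♭M. -/
open Monoid

/-- For compatible actions of `M` and `N` on each other, the Peiffer quotient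
`q : M ∗ N → M ⋈ N` satisfies `q (s m s⁻¹) = q (φ_M(s)(m))` for every word
`s ∈ M ∗ N` and every `m ∈ M`, where `φ_M : M ∗ N → Aut M` is the induced
action of `M ∗ N` on `M`. -/
theorem stmt15 (M N : Type) [Group M] [Group N]
    (ξ : N →* MulAut M) (ξ' : M →* MulAut N)
    (hc1 : ∀ (m m' : M) (n : N), ξ (ξ' m n) m' = m * ξ n (m⁻¹ * m' * m) * m⁻¹)
    (hc2 : ∀ (m : M) (n n' : N), ξ' (ξ n m) n' = n * ξ' m (n⁻¹ * n' * n) * n⁻¹) :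
    ∀ (s : Coprod M N) (m : M),
      QuotientGroup.mk' (peifferSub M N ξ ξ') (s * Coprod.inl m * s⁻¹) =
        QuotientGroup.mk' (peifferSub M N ξ ξ')
          (Coprod.inl (Coprod.lift (MulAut.conj : M →* MulAut M) ξ s m)) := by
  set K := peifferSub M N ξ ξ' with hK
  set q := QuotientGroup.mk' K with hq
  set φ := Coprod.lift (MulAut.conj : M →* MulAut M) ξ with hφ
  intro s
  induction s using Coprod.induction_on with
  | inl m' =>
    intro m
    simp [hφ, ← map_inv, ← map_mul]
  | inr n =>
    intro m
    have hmem : Coprod.inl (ξ n m) * Coprod.inr n * (Coprod.inl m)⁻¹ *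
        (Coprod.inr n : Coprod M N)⁻¹ ∈ K := by
      apply Subgroup.subset_normalClosure
      exact Or.inl ⟨m, n, rfl⟩
    have hmem2 := (peifferSub_normal M N ξ ξ').conj_mem _ hmem (Coprod.inl (ξ n m))⁻¹
    have key : (Coprod.inr n * Coprod.inl m * (Coprod.inr n)⁻¹)⁻¹ *
        Coprod.inl (ξ n m) ∈ K := by
      have : (Coprod.inr n * Coprod.inl m * (Coprod.inr n)⁻¹)⁻¹ * Coprod.inl (ξ n m) =
          (Coprod.inl (ξ n m))⁻¹ * (Coprod.inl (ξ n m) * Coprod.inr n * (Coprod.inl m)⁻¹ *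
          (Coprod.inr n)⁻¹) * ((Coprod.inl (ξ n m))⁻¹)⁻¹ := by group
      rw [this]; exact hmem2
    have h2 : q (Coprod.inr n * Coprod.inl m * (Coprod.inr n)⁻¹) =
        q (Coprod.inl (ξ n m)) := QuotientGroup.eq.mpr key
    simpa [hφ] using h2
  | mul x y hx hy =>
    intro m
    have h0 : x * y * Coprod.inl m * (x * y)⁻¹ =
        x * (y * Coprod.inl m * y⁻¹) * x⁻¹ := by group
    calc q (x * y * Coprod.inl m * (x * y)⁻¹)
        = q x * q (y * Coprod.inl m * y⁻¹) * q x⁻¹ := by rw [h0, map_mul, map_mul]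
      _ = q x * q (Coprod.inl (φ y m)) * q x⁻¹ := by rw [hy]
      _ = q (x * Coprod.inl (φ y m) * x⁻¹) := by rw [map_mul, map_mul]
      _ = q (Coprod.inl (φ x (φ y m))) := hx _
      _ = q (Coprod.inl (φ (x * y) m)) := by rw [map_mul]; rfl
end

section
/- Let q : A → B and idX : X → X be group homomorphisms where q is surjective and X is any group, and suppose q = coeq(d, c) is the coequalizer of a reflexive pair d, c : R → A (i.e. there is e : A → R with d∘e = c∘e = id_A). Then the induced homomorphism q♭1 : A♭X → B♭X between the kernels of the canonical projections A * X → A and B * X → B is the coequalizer of d♭1, c♭1 : R♭X → A♭X. -/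
open Monoid

/-- The functor `(−) ♭ X` on groups preserves coequalizers of reflexive pairs:
if `q : A → B` is a surjective homomorphism which is the coequalizer of a
reflexive pair `d, c : R ⇉ A`, then the induced map `q ♭ 1 : A ♭ X → B ♭ X`
(the restriction of `q ∗ id_X`) is the coequalizer of `d ♭ 1, c ♭ 1 : R ♭ X ⇉ A ♭ X`. -/
theorem stmt18 (A B R X : Type) [Group A] [Group B] [Group R] [Group X]
    (q : A →* B) (hq : Function.Surjective q)
    (d c : R →* A) (e : A →* R)
    (hde : d.comp e = MonoidHom.id A) (hce : c.comp e = MonoidHom.id A)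
    (hqd : q.comp d = q.comp c)
    (hcoeq : ∀ (H : Type) [Group H] (g : A →* H), g.comp d = g.comp c →
      ∃! h : B →* H, h.comp q = g)
    -- the induced maps between the kernels of the canonical projections,
    -- i.e. the restrictions of `q ∗ id_X`, `d ∗ id_X` and `c ∗ id_X`
    (qb : (Coprod.fst : Coprod A X →* A).ker →* (Coprod.fst : Coprod B X →* B).ker)
    (hqb : ∀ w : (Coprod.fst : Coprod A X →* A).ker,
      (qb w : Coprod B X) = Coprod.map q (MonoidHom.id X) w)
    (db : (Coprod.fst : Coprod R X →* R).ker →* (Coprod.fst : Coprod A X →* A).ker)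
    (hdb : ∀ w : (Coprod.fst : Coprod R X →* R).ker,
      (db w : Coprod A X) = Coprod.map d (MonoidHom.id X) w)
    (cb : (Coprod.fst : Coprod R X →* R).ker →* (Coprod.fst : Coprod A X →* A).ker)
    (hcb : ∀ w : (Coprod.fst : Coprod R X →* R).ker,
      (cb w : Coprod A X) = Coprod.map c (MonoidHom.id X) w) :
    qb.comp db = qb.comp cb ∧
    ∀ (T : Type) [Group T] (g : (Coprod.fst : Coprod A X →* A).ker →* T),
      g.comp db = g.comp cb →
      ∃! h : (Coprod.fst : Coprod B X →* B).ker →* T, h.comp qb = g := by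
  classical
  have hde' : ∀ a, d (e a) = a := fun a => DFunLike.congr_fun hde a
  have hce' : ∀ a, c (e a) = a := fun a => DFunLike.congr_fun hce a
  -- abbreviations via plain `have`-free lets
  let D : Coprod R X →* Coprod A X := Coprod.map d (MonoidHom.id X)
  let C : Coprod R X →* Coprod A X := Coprod.map c (MonoidHom.id X)
  let Q : Coprod A X →* Coprod B X := Coprod.map q (MonoidHom.id X)
  let E : Coprod A X →* Coprod R X := Coprod.map e (MonoidHom.id X)
  have hDE : ∀ v, D (E v) = v := by
    intro v
    show (D.comp E) v = v
    rw [show D.comp E = MonoidHom.id _ by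
      simp only [D, E, Coprod.map_comp_map, hde, MonoidHom.id_comp, Coprod.map_id_id]]
    rfl
  have hCE : ∀ v, C (E v) = v := by
    intro v
    show (C.comp E) v = v
    rw [show C.comp E = MonoidHom.id _ by
      simp only [C, E, Coprod.map_comp_map, hce, MonoidHom.id_comp, Coprod.map_id_id]]
    rfl
  have hfstD : ∀ w, Coprod.fst (D w) = d (Coprod.fst w) := by
    intro w
    have : (Coprod.fst).comp D = d.comp Coprod.fst :=
      Coprod.hom_ext (by ext x; simp [D]) (by ext x; simp [D])
    exact DFunLike.congr_fun this w
  have hfstC : ∀ w, Coprod.fst (C w) = c (Coprod.fst w) := by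
    intro w
    have : (Coprod.fst).comp C = c.comp Coprod.fst :=
      Coprod.hom_ext (by ext x; simp [C]) (by ext x; simp [C])
    exact DFunLike.congr_fun this w
  have hfstQ : ∀ w, Coprod.fst (Q w) = q (Coprod.fst w) := by
    intro w
    have : (Coprod.fst).comp Q = q.comp Coprod.fst :=
      Coprod.hom_ext (by ext x; simp [Q]) (by ext x; simp [Q])
    exact DFunLike.congr_fun this w
  -- the subgroup N₀ of elements related to 1
  let N₀ : Subgroup (Coprod A X) :=
    Subgroup.comap (MonoidHom.inl (Coprod A X) (Coprod A X)) (D.prod C).range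
  have memN : ∀ v, v ∈ N₀ ↔ ∃ w, D w = v ∧ C w = 1 := by
    intro v
    constructor
    · rintro ⟨w, hw⟩
      exact ⟨w, congrArg Prod.fst hw, congrArg Prod.snd hw⟩
    · rintro ⟨w, hw1, hw2⟩
      exact ⟨w, Prod.ext hw1 hw2⟩
  haveI hN : N₀.Normal := by
    constructor
    intro n hn u
    obtain ⟨w, hw1, hw2⟩ := (memN n).1 hn
    refine (memN _).2 ⟨E u * w * (E u)⁻¹, ?_, ?_⟩
    · simp [map_mul, map_inv, hDE, hw1]
    · simp [map_mul, map_inv, hCE, hw2]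
  -- quotient and the induced map from B ∗ X
  let π : Coprod A X →* (Coprod A X ⧸ N₀) := QuotientGroup.mk' N₀
  have hπdc : (π.comp Coprod.inl).comp d = (π.comp Coprod.inl).comp c := by
    ext r
    show π (Coprod.inl (d r)) = π (Coprod.inl (c r))
    apply (QuotientGroup.eq ..).2
    refine (memN _).2 ⟨Coprod.inl (r⁻¹ * e (c r)), ?_, ?_⟩
    · show Coprod.inl (d (r⁻¹ * e (c r))) = _
      rw [map_mul, map_inv, hde', map_mul, map_inv]
    · show Coprod.inl (c (r⁻¹ * e (c r))) = 1
      rw [map_mul, map_inv, hce', inv_mul_cancel, map_one]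
  obtain ⟨φB, hφB, -⟩ := hcoeq (Coprod A X ⧸ N₀) (π.comp Coprod.inl) hπdc
  let φ : Coprod B X →* (Coprod A X ⧸ N₀) := Coprod.lift φB (π.comp Coprod.inr)
  have hφQ : φ.comp Q = π := by
    apply Coprod.hom_ext
    · ext a
      show φ (Q (Coprod.inl a)) = π (Coprod.inl a)
      have : Q (Coprod.inl a) = Coprod.inl (q a) := rfl
      rw [this]
      show φB (q a) = π (Coprod.inl a)
      exact DFunLike.congr_fun hφB a
    · ext x
      rfl
  have kerQ : ∀ v, Q v = 1 → v ∈ N₀ := by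
    intro v hv
    have : π v = 1 := by
      have := DFunLike.congr_fun hφQ v
      rw [← this]
      show φ (Q v) = 1
      rw [hv, map_one]
    exact (QuotientGroup.eq_one_iff v).1 this
  -- key: pairs with equal image under qb come from a single element of R ♭ X
  have key : ∀ v v' : (Coprod.fst : Coprod A X →* A).ker, qb v = qb v' →
      ∃ w : (Coprod.fst : Coprod R X →* R).ker, db w = v ∧ cb w = v' := by
    intro v v' h
    have hQ : Q ((v : Coprod A X) * (v' : Coprod A X)⁻¹) = 1 := by
      have h' : (qb v : Coprod B X) = (qb v' : Coprod B X) := by rw [h]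
      rw [hqb, hqb] at h'
      rw [map_mul, map_inv]
      rw [show Q (v : Coprod A X) = Q (v' : Coprod A X) from h', mul_inv_cancel]
    obtain ⟨w0, hw1, hw2⟩ := (memN _).1 (kerQ _ hQ)
    set w1 : Coprod R X := w0 * E (v' : Coprod A X) with hw1def
    have hDw1 : D w1 = (v : Coprod A X) := by
      rw [hw1def, map_mul, hw1, hDE, inv_mul_cancel_right]
    have hCw1 : C w1 = (v' : Coprod A X) := by
      rw [hw1def, map_mul, hw2, hCE, one_mul]
    set w2 : Coprod R X := (Coprod.inl (Coprod.fst w1))⁻¹ * w1 with hw2def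
    have hdfst : d (Coprod.fst w1) = 1 := by
      rw [← hfstD, hDw1]; exact v.2
    have hcfst : c (Coprod.fst w1) = 1 := by
      rw [← hfstC, hCw1]; exact v'.2
    have hDw2 : D w2 = (v : Coprod A X) := by
      rw [hw2def, map_mul, map_inv, hDw1]
      have : D (Coprod.inl (Coprod.fst w1)) = Coprod.inl (d (Coprod.fst w1)) := rfl
      rw [this, hdfst, map_one, inv_one, one_mul]
    have hCw2 : C w2 = (v' : Coprod A X) := by
      rw [hw2def, map_mul, map_inv, hCw1]
      have : C (Coprod.inl (Coprod.fst w1)) = Coprod.inl (c (Coprod.fst w1)) := rfl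
      rw [this, hcfst, map_one, inv_one, one_mul]
    have hker : w2 ∈ (Coprod.fst : Coprod R X →* R).ker := by
      show Coprod.fst w2 = 1
      rw [hw2def, map_mul, map_inv]
      have : Coprod.fst (Coprod.inl (Coprod.fst w1) : Coprod R X) = Coprod.fst w1 := rfl
      rw [this, inv_mul_cancel]
    refine ⟨⟨w2, hker⟩, ?_, ?_⟩
    · exact Subtype.ext (by rw [hdb]; exact hDw2)
    · exact Subtype.ext (by rw [hcb]; exact hCw2)
  -- surjectivity of qb
  have qbsurj : ∀ u : (Coprod.fst : Coprod B X →* B).ker,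
      ∃ v : (Coprod.fst : Coprod A X →* A).ker, qb v = u := by
    intro u
    have Qsurj : ∀ z : Coprod B X, ∃ v, Q v = z := by
      intro z
      induction z using Coprod.induction_on with
      | inl b =>
        obtain ⟨a, rfl⟩ := hq b
        exact ⟨Coprod.inl a, rfl⟩
      | inr x => exact ⟨Coprod.inr x, rfl⟩
      | mul z1 z2 h1 h2 =>
        obtain ⟨v1, rfl⟩ := h1
        obtain ⟨v2, rfl⟩ := h2
        exact ⟨v1 * v2, map_mul Q v1 v2⟩
    obtain ⟨v0, hv0⟩ := Qsurj (u : Coprod B X)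
    have hfst : q (Coprod.fst v0) = 1 := by
      rw [← hfstQ, hv0]; exact u.2
    set v : Coprod A X := (Coprod.inl (Coprod.fst v0))⁻¹ * v0 with hvdef
    have hvker : v ∈ (Coprod.fst : Coprod A X →* A).ker := by
      show Coprod.fst v = 1
      rw [hvdef, map_mul, map_inv]
      have : Coprod.fst (Coprod.inl (Coprod.fst v0) : Coprod A X) = Coprod.fst v0 := rfl
      rw [this, inv_mul_cancel]
    refine ⟨⟨v, hvker⟩, Subtype.ext ?_⟩
    rw [hqb]
    show Q v = (u : Coprod B X)
    rw [hvdef, map_mul, map_inv, hv0]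
    have : Q (Coprod.inl (Coprod.fst v0)) = Coprod.inl (q (Coprod.fst v0)) := rfl
    rw [this, hfst, map_one, inv_one, one_mul]
  constructor
  · ext w
    simp only [MonoidHom.comp_apply]
    rw [show (qb (db w) : Coprod B X) = Q ((db w : Coprod A X)) from hqb _,
        show (qb (cb w) : Coprod B X) = Q ((cb w : Coprod A X)) from hqb _,
        hdb, hcb]
    show (Q.comp D) (w : Coprod R X) = (Q.comp C) (w : Coprod R X)
    congr 1
    simp only [Q, D, C, Coprod.map_comp_map, hqd, MonoidHom.id_comp]
  · intro T _ g hg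
    have gwd : ∀ v v' : (Coprod.fst : Coprod A X →* A).ker, qb v = qb v' → g v = g v' := by
      intro v v' h
      obtain ⟨w, hw, hw'⟩ := key v v' h
      rw [← hw, ← hw']
      exact DFunLike.congr_fun hg w
    choose s hs using qbsurj
    refine ⟨{ toFun := fun u => g (s u),
              map_one' := by
                show g (s 1) = 1
                rw [gwd (s 1) 1 (by rw [hs, map_one]), map_one]
              map_mul' := by
                intro u1 u2
                show g (s (u1 * u2)) = g (s u1) * g (s u2)
                rw [← map_mul]
                exact gwd _ _ (by rw [hs, map_mul, hs, hs]) }, ?_, ?_⟩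
    · ext v
      show g (s (qb v)) = g v
      exact gwd _ _ (hs (qb v))
    · intro h' hh'
      ext u
      have h1 : h' (qb (s u)) = g (s u) := DFunLike.congr_fun hh' (s u)
      rw [hs u] at h1
      show h' u = g (s u)
      exact h1
end
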